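/- arXiv:1204.4533 — 4 statements merged into one kernel-verified Lean document; each statement's English description precedes it below -/
import Mathlib

section
/- Let V be an FI#-module over a field k of arbitrary characteristic. The following are equivalent: (i) V is finitely generated as an FI-module; (ii) dim_k(V_n) is bounded above by a polynomial in n; (iii) there is a polynomial P ∈ Q[T] such that dim_k(V_n) = P(n) for all n ≥ 0. Moreover, over an arbitrary commutative ring k, V is finitely generated if and only if the k-module V_n is generated by O(n^d) elements for some d. -/
open Function

universe u

/-- An FI-module over `k`, presented via the standard skeleton of the category FI:
objects are natural numbers `n` (standing for `{1,…,n}`) and morphisms `m ⟶ n` are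
injections `Fin m ↪ Fin n`. -/
structure FIModule (k : Type) [CommRing k] where
  obj : ℕ → Type
  [isAddCommGroup : ∀ n, AddCommGroup (obj n)]
  [isModule : ∀ n, Module k (obj n)]
  map : ∀ {m n : ℕ}, (Fin m ↪ Fin n) → (obj m →ₗ[k] obj n)
  map_id : ∀ n : ℕ, map (Embedding.refl (Fin n)) = LinearMap.id
  map_comp : ∀ {m n p : ℕ} (f : Fin m ↪ Fin n) (g : Fin n ↪ Fin p),
    map (f.trans g) = (map g).comp (map f)

attribute [instance] FIModule.isAddCommGroup FIModule.isModule

variable {k : Type} [CommRing k]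

/-- A sub-FI-module of an FI-module: a submodule of each `V_n`, preserved by all the
maps induced by injections. -/
structure SubFI (V : FIModule k) where
  carrier : ∀ n : ℕ, Submodule k (V.obj n)
  map_mem : ∀ {m n : ℕ} (f : Fin m ↪ Fin n) {x : V.obj m},
    x ∈ carrier m → V.map f x ∈ carrier n

/-- An FI-module is finitely generated if some finite set of elements of `∐ V_n` is
contained in no proper sub-FI-module. -/
def FIModule.FinitelyGenerated (V : FIModule k) : Prop :=
  ∃ S : Finset (Σ n : ℕ, V.obj n),
    ∀ N : SubFI V, (∀ s ∈ S, s.2 ∈ N.carrier s.1) → ∀ (n : ℕ) (x : V.obj n), x ∈ N.carrier n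

/-- An FI-module is generated in degree `≤ d` if the only sub-FI-module containing all
`V_m` for `m ≤ d` is the whole module. -/
def FIModule.GeneratedInDegreeLE (V : FIModule k) (d : ℕ) : Prop :=
  ∀ N : SubFI V, (∀ m : ℕ, m ≤ d → ∀ x : V.obj m, x ∈ N.carrier m) →
    ∀ (n : ℕ) (x : V.obj n), x ∈ N.carrier n

/-- The `S_n`-representation on `V_n` induced by an FI-module structure. -/
def FIModule.rep (V : FIModule k) (n : ℕ) :
    Representation k (Equiv.Perm (Fin n)) (V.obj n) where
  toFun σ := V.map σ.toEmbedding
  map_one' := by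
    show V.map (1 : Equiv.Perm (Fin n)).toEmbedding = 1
    have h : (1 : Equiv.Perm (Fin n)).toEmbedding = Embedding.refl (Fin n) := rfl
    rw [h, V.map_id]; rfl
  map_mul' σ τ := by
    show V.map (σ * τ).toEmbedding = V.map σ.toEmbedding * V.map τ.toEmbedding
    have h : (σ * τ).toEmbedding = (τ.toEmbedding).trans σ.toEmbedding := rfl
    rw [h, V.map_comp]; rfl

/-- The standard inclusion `{1,…,n} ↪ {1,…,n+1}`. -/
def succEmb (n : ℕ) : Fin n ↪ Fin (n + 1) := Fin.castLEEmb (Nat.le_succ n)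

/-! ### The category FI♯ of partial injections -/

/-- A morphism `m ⟶ n` in the category FI♯: a partial injection from `{1,…,m}` to
`{1,…,n}`, i.e. a bijection `φ : A → B` between a subset `A ⊆ {1,…,m}` and a subset
`B ⊆ {1,…,n}`, encoded as an injective partial function. -/
structure PartialInj (m n : ℕ) where
  toFun : Fin m → Option (Fin n)
  inj : ∀ ⦃i j : Fin m⦄ ⦃x : Fin n⦄, toFun i = some x → toFun j = some x → i = j

theorem PartialInj.ext {m n : ℕ} {f g : PartialInj m n}
    (h : ∀ i, f.toFun i = g.toFun i) : f = g := by
  cases f; cases g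
  simp only [PartialInj.mk.injEq]
  exact funext h

/-- The identity morphism of FI♯. -/
def PartialInj.id (n : ℕ) : PartialInj n n :=
  ⟨fun i => some i, fun i j x hi hj => by
    rw [(Option.some.inj hi), (Option.some.inj hj)]⟩

/-- Composition of partial injections (as partial functions). -/
def PartialInj.comp {m n p : ℕ} (g : PartialInj n p) (f : PartialInj m n) :
    PartialInj m p :=
  ⟨fun i => (f.toFun i).bind g.toFun, by
    intro i j x hi hj
    obtain ⟨y, hy, hgy⟩ := Option.bind_eq_some_iff.mp hi
    obtain ⟨z, hz, hgz⟩ := Option.bind_eq_some_iff.mp hj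
    obtain rfl : y = z := g.inj hgy hgz
    exact f.inj hy hz⟩

/-- An FI♯-module over `k`: a functor from the category FI♯ (partial injections of
finite sets) to `k`-modules, presented via the skeleton with objects `ℕ`. -/
structure FIsharpModule (k : Type) [CommRing k] where
  obj : ℕ → Type
  [isAddCommGroup : ∀ n, AddCommGroup (obj n)]
  [isModule : ∀ n, Module k (obj n)]
  map : ∀ {m n : ℕ}, PartialInj m n → (obj m →ₗ[k] obj n)
  map_id : ∀ n : ℕ, map (PartialInj.id n) = LinearMap.id
  map_comp : ∀ {m n p : ℕ} (f : PartialInj m n) (g : PartialInj n p),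
    map (g.comp f) = (map g).comp (map f)

attribute [instance] FIsharpModule.isAddCommGroup FIsharpModule.isModule

/-- The morphism of FI♯ determined by an honest injection (the case `A = S` of a
triple `(A,B,φ)`). -/
def embToPartial {m n : ℕ} (f : Fin m ↪ Fin n) : PartialInj m n :=
  ⟨fun i => some (f i), fun _ _ _ hi hj =>
    f.injective ((Option.some.inj hi).trans (Option.some.inj hj).symm)⟩

theorem embToPartial_id (n : ℕ) :
    embToPartial (Embedding.refl (Fin n)) = PartialInj.id n := rfl

theorem embToPartial_comp {m n p : ℕ} (f : Fin m ↪ Fin n) (g : Fin n ↪ Fin p) :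
    embToPartial (f.trans g) = (embToPartial g).comp (embToPartial f) :=
  PartialInj.ext (fun _ => rfl)

/-- The FI-module underlying an FI♯-module, obtained by restricting to the morphisms
of FI♯ coming from honest injections. -/
def FIsharpModule.toFI (V : FIsharpModule k) : FIModule k where
  obj := V.obj
  map f := V.map (embToPartial f)
  map_id n := by
    show V.map (embToPartial (Embedding.refl (Fin n))) = LinearMap.id
    rw [embToPartial_id, V.map_id]
  map_comp f g := by
    show V.map (embToPartial (f.trans g))
        = (V.map (embToPartial g)).comp (V.map (embToPartial f))
    rw [embToPartial_comp, V.map_comp]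


/-!
The partial identities `e_T = V(id_T)`, `T ⊆ [n]`, are commuting idempotents of `V_n`, so the
products `ε_S = ∏_{i ∈ S} (1 - e_{[n]-i}) * ∏_{i ∉ S} e_{[n]-i}` form a complete family of
orthogonal idempotents. For an injection `f : [a] ↪ [n]` with image `S` one has
`ε_S = V(f) ∘ ε_{[a]} ∘ V(f⁻¹)` and `V(f⁻¹) ∘ V(f) = id`, so `ε_S V_n ≅ W_a := ε_{[a]} V_a` and
`V_n ≅ ⊕_{S ⊆ [n]} W_{|S|}`. Since `ε_{[a]}` kills the image of every non-surjective injection,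
`V` is generated in degree `≤ d` iff `W_a = 0` for `a > d`.

Over a field, `dim V_n = ∑_a C(n, a) dim W_a`, a polynomial in `n` once `V` is finitely generated.
Conversely, `V_n` surjects onto `W_a ^ C(n, a)`; if `W_a ≠ 0`, reducing modulo a maximal ideal `m`
with `m W_a ≠ W_a` (Nakayama) shows that `V_n` needs at least `C(n, a)` generators, which
eventually exceeds any polynomial of degree `< a`.
-/

open Finset

theorem Polynomial.le_natDegree_of_choose_le_eval {P : Polynomial ℚ} {a : ℕ}
    (h : ∀ n : ℕ, (n.choose a : ℚ) ≤ P.eval (n : ℚ)) : a ≤ P.natDegree := by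
  by_contra! ha
  have hD : (descPochhammer ℚ a).degree = a := by
    rw [degree_eq_natDegree (monic_descPochhammer ℚ a).ne_zero, descPochhammer_natDegree]
  have hdeg : ((a.factorial : ℚ) • P).degree < (descPochhammer ℚ a).degree :=
    hD ▸ (degree_smul_le _ _).trans_lt ((degree_le_natDegree).trans_lt (by exact_mod_cast ha))
  -- `a! * C(n, a)` is the value at `n` of `descPochhammer a`, which minus `a! * P` is monic of
  -- degree `a`, hence eventually positive
  have hmonic := (monic_descPochhammer ℚ a).sub_of_left hdeg
  have hpos : 0 < (descPochhammer ℚ a - (a.factorial : ℚ) • P).degree := by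
    rw [degree_sub_eq_left_of_degree_lt hdeg, hD]
    exact_mod_cast Nat.zero_lt_of_lt ha
  obtain ⟨n, hn⟩ := ((tendsto_atTop_of_leadingCoeff_nonneg _ hpos
    (hmonic.leadingCoeff ▸ zero_le_one)).comp tendsto_natCast_atTop_atTop).eventually_gt_atTop
    0 |>.exists
  have hle := h n
  simp only [comp_apply, eval_sub, eval_smul, smul_eq_mul, sub_pos,
    descPochhammer_eval_eq_descFactorial, Nat.descFactorial_eq_factorial_mul_choose,
    Nat.cast_mul] at hn
  nlinarith [(Nat.cast_pos (α := ℚ)).mpr a.factorial_pos]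

section BoolAtom

variable {A ι : Type*} [CommRing A] [Fintype ι] [DecidableEq ι]

def boolAtom (q : ι → A) (S : Finset ι) : A := (∏ i ∈ S, (1 - q i)) * ∏ i ∈ Sᶜ, q i

theorem completeOrthogonalIdempotents_boolAtom {q : ι → A} (hq : ∀ i, IsIdempotentElem (q i)) :
    CompleteOrthogonalIdempotents (boolAtom q) where
  idem S :=
    (prod_induction _ _ (fun _ _ => .mul) .one fun i _ => (hq i).one_sub).mul
      (prod_induction _ _ (fun _ _ => .mul) .one fun i _ => hq i)
  ortho := by
    have key {S T : Finset ι} {i : ι} (hi : i ∈ S \ T) : boolAtom q S * boolAtom q T = 0 := by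
      rw [mem_sdiff] at hi
      refine zero_dvd_iff.mp ?_
      rw [← (hq i).one_sub_mul_self]
      exact mul_dvd_mul (dvd_mul_of_dvd_left (dvd_prod_of_mem _ hi.1) _)
        (dvd_mul_of_dvd_right (dvd_prod_of_mem _ (mem_compl.mpr hi.2)) _)
    intro S T hST
    obtain ⟨i, hi⟩ | ⟨i, hi⟩ : (S \ T).Nonempty ∨ (T \ S).Nonempty := by
      simpa only [sdiff_nonempty, ← not_and_or] using fun h => hST (h.1.antisymm h.2)
    · exact key hi
    · rw [mul_comm, key hi]
  complete := by
    simpa [boolAtom, ← powerset_univ, compl_eq_univ_sdiff] using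
      (prod_add (fun i => 1 - q i) q univ).symm

end BoolAtom

section Decomposition

variable {R M ι : Type*} [Semiring R] [AddCommMonoid M] [Module R M] [Fintype ι] [DecidableEq ι]

def CompleteOrthogonalIdempotents.linearEquivPiRange {e : ι → Module.End R M}
    (he : CompleteOrthogonalIdempotents e) : M ≃ₗ[R] Π i, LinearMap.range (e i) where
  toLinearMap := LinearMap.pi fun i => (e i).rangeRestrict
  invFun g := ∑ i, (g i : M)
  left_inv x := by simpa using congr($(he.complete) x)
  right_inv g := by
    ext j
    have h (i : ι) : e j (g i) = if i = j then (g j : M) else 0 := by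
      obtain ⟨y, hy⟩ := (g i).2
      by_cases hij : i = j
      · subst hij
        rw [if_pos rfl, ← hy, ← Module.End.mul_apply, (he.idem i).eq]
      · rw [if_neg hij, ← hy, ← Module.End.mul_apply, he.ortho (Ne.symm hij),
          LinearMap.zero_apply]
    simp [h]

end Decomposition

section Retract

variable {R M N : Type*} [Semiring R] [AddCommMonoid M] [Module R M] [AddCommMonoid N] [Module R N]

theorem LinearMap.range_comp_comp_eq_map_range {F : N →ₗ[R] M} {G : M →ₗ[R] N}
    (hGF : G ∘ₗ F = LinearMap.id) (E : N →ₗ[R] N) :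
    LinearMap.range (F ∘ₗ E ∘ₗ G) = (LinearMap.range E).map F := by
  have hG : LinearMap.range G = ⊤ :=
    LinearMap.range_eq_top.mpr (LeftInverse.surjective (LinearMap.congr_fun hGF))
  rw [LinearMap.range_comp, LinearMap.range_comp, hG, Submodule.map_top]

noncomputable def LinearMap.rangeCompCompEquiv {F : N →ₗ[R] M} {G : M →ₗ[R] N}
    (hGF : G ∘ₗ F = LinearMap.id) (E : N →ₗ[R] N) :
    LinearMap.range (F ∘ₗ E ∘ₗ G) ≃ₗ[R] LinearMap.range E :=
  (LinearEquiv.ofEq _ _ (range_comp_comp_eq_map_range hGF E)).trans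
    (Submodule.equivMapOfInjective F (LeftInverse.injective (LinearMap.congr_fun hGF)) _).symm

end Retract

section Nakayama

variable {R M : Type*} [CommRing R] [AddCommGroup M] [Module R M]

theorem Submodule.exists_isMaximal_smul_top_ne_top [Module.Finite R M] [Nontrivial M] :
    ∃ m : Ideal R, m.IsMaximal ∧ m • (⊤ : Submodule R M) ≠ ⊤ := by
  obtain ⟨m, hm, hann⟩ := Ideal.exists_le_maximal (Module.annihilator R M)
    (Module.annihilator_eq_top_iff.not.mpr (not_subsingleton M))
  refine ⟨m, hm, fun htop => hm.ne_top ?_⟩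
  obtain ⟨r, hr1, hr⟩ := Submodule.exists_sub_one_mem_and_smul_eq_zero_of_fg_of_le_smul m ⊤
    Module.Finite.fg_top htop.ge
  have hrm : r ∈ m := hann (Module.mem_annihilator.mpr fun x => hr x trivial)
  exact (Ideal.eq_top_iff_one m).mpr (by simpa using m.sub_mem hrm hr1)

theorem Module.card_le_card_of_span_pi_eq_top [Module.Finite R M] [Nontrivial M] {ι : Type*}
    [Fintype ι] {s : Finset (ι → M)} (hs : Submodule.span R (s : Set (ι → M)) = ⊤) :
    Fintype.card ι ≤ s.card := by
  classical
  obtain ⟨m, hm, hne⟩ := Submodule.exists_isMaximal_smul_top_ne_top (R := R) (M := M)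
  -- pass to the nonzero vector space `M / m M` over the residue field `R / m`
  let K := R ⧸ m
  let N := M ⧸ m • (⊤ : Submodule R M)
  let : Field K := Ideal.Quotient.field m
  have : Nontrivial N := Submodule.Quotient.nontrivial_iff.mpr hne
  have : IsScalarTower R K N := Module.IsTorsionBySet.isScalarTower _
  have : Module.Finite K N := Module.Finite.of_restrictScalars_finite R K N
  let π : (ι → M) →ₗ[R] (ι → N) := (m • (⊤ : Submodule R M)).mkQ.compLeft ι
  have hπ : Submodule.span K (s.image π : Set (ι → N)) = ⊤ := by
    refine eq_top_iff.mpr fun x _ => Submodule.span_le_restrictScalars R K _ ?_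
    rw [coe_image, ← Submodule.map_span, hs, Submodule.map_top,
      LinearMap.range_eq_top.mpr (Submodule.mkQ_surjective _).comp_left]
    trivial
  calc Fintype.card ι ≤ Fintype.card ι * Module.finrank K N :=
        Nat.le_mul_of_pos_right _ Module.finrank_pos
    _ = Module.finrank K (ι → N) := by simp [Module.finrank_pi_fintype]
    _ ≤ (s.image π).card := by
        have := finrank_span_finset_le_card (R := K) (s.image π)
        rwa [Set.finrank, hπ, finrank_top] at this
    _ ≤ s.card := card_image_le

end Nakayama

namespace PartialInj

def idOn {n : ℕ} (S : Finset (Fin n)) : PartialInj n n :=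
  ⟨fun i => if i ∈ S then some i else none, fun i j x hi hj => by
    split_ifs at hi hj
    exact (Option.some.inj hi).trans (Option.some.inj hj).symm⟩

noncomputable def invOfEmb {a n : ℕ} (f : Fin a ↪ Fin n) : PartialInj n a :=
  ⟨partialInv f, fun _ _ _ hi hj =>
    ((f.injective.isPartialInv _ _).mp hi).symm.trans ((f.injective.isPartialInv _ _).mp hj)⟩

theorem idOn_comp_idOn {n : ℕ} (S T : Finset (Fin n)) :
    (idOn S).comp (idOn T) = idOn (S ∩ T) :=
  PartialInj.ext fun i => by by_cases hT : i ∈ T <;> simp [comp, idOn, hT]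

theorem idOn_univ (n : ℕ) : idOn (univ : Finset (Fin n)) = PartialInj.id n :=
  PartialInj.ext fun i => by simp [idOn, PartialInj.id]

theorem invOfEmb_comp_embToPartial {a n : ℕ} (f : Fin a ↪ Fin n) :
    (invOfEmb f).comp (embToPartial f) = PartialInj.id a :=
  PartialInj.ext fun i => by simp [comp, invOfEmb, embToPartial, PartialInj.id,
    partialInv_left f.injective]

theorem embToPartial_comp_invOfEmb {a n : ℕ} (f : Fin a ↪ Fin n) :
    (embToPartial f).comp (invOfEmb f) = idOn (univ.map f) := by
  refine PartialInj.ext fun i => ?_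
  by_cases hi : ∃ j, f j = i
  · obtain ⟨j, rfl⟩ := hi
    simp [comp, invOfEmb, embToPartial, idOn, partialInv_left f.injective]
  · have : partialInv f i = none := by
      simpa [partialInv] using hi
    simp_all [comp, invOfEmb, embToPartial, idOn]

theorem embToPartial_comp_idOn {a n : ℕ} (f : Fin a ↪ Fin n) {T : Finset (Fin a)}
    {T' : Finset (Fin n)} (h : ∀ i, f i ∈ T' ↔ i ∈ T) :
    (embToPartial f).comp (idOn T) = (idOn T').comp (embToPartial f) :=
  PartialInj.ext fun i => by by_cases hi : i ∈ T <;> simp [comp, embToPartial, idOn, h, hi]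

theorem idOn_comp_embToPartial {a n : ℕ} (f : Fin a ↪ Fin n) {T : Finset (Fin n)}
    (h : ∀ i, f i ∈ T) : (idOn T).comp (embToPartial f) = embToPartial f :=
  PartialInj.ext fun i => by simp [comp, embToPartial, idOn, h]

end PartialInj

namespace FIModule

variable (M : FIModule k)

def spanLE (d : ℕ) : SubFI M where
  carrier n := ⨆ (m : ℕ) (_ : m ≤ d) (f : Fin m ↪ Fin n), LinearMap.range (M.map f)
  map_mem {_ n} g := by
    refine fun hx => Submodule.mem_comap.mp ((iSup₂_le fun m hm => iSup_le fun f => ?_ :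
      _ ≤ Submodule.comap (M.map g) _) hx)
    rw [← Submodule.map_le_iff_le_comap, ← LinearMap.range_comp, ← M.map_comp]
    exact le_iSup₂_of_le m hm (le_iSup_of_le (f.trans g) le_rfl)

open scoped Classical in
noncomputable def orbit (G : Finset (Σ n : ℕ, M.obj n)) (n : ℕ) : Finset (M.obj n) :=
  G.biUnion fun g => univ.image fun f : Fin g.1 ↪ Fin n => M.map f g.2

theorem mem_orbit {G : Finset (Σ n : ℕ, M.obj n)} {n : ℕ} {y : M.obj n} :
    y ∈ M.orbit G n ↔ ∃ g ∈ G, ∃ f : Fin g.1 ↪ Fin n, M.map f g.2 = y := by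
  simp [orbit]

theorem card_orbit_le (G : Finset (Σ n : ℕ, M.obj n)) (n : ℕ) :
    (M.orbit G n).card ≤ G.card * (n + 1) ^ G.sup Sigma.fst := by
  classical
  calc (M.orbit G n).card ≤ ∑ g ∈ G, Fintype.card (Fin g.1 ↪ Fin n) :=
        card_biUnion_le.trans (sum_le_sum fun g _ => card_image_le)
    _ ≤ ∑ _g ∈ G, (n + 1) ^ G.sup Sigma.fst := sum_le_sum fun g hg => by
        rw [Fintype.card_embedding_eq, Fintype.card_fin, Fintype.card_fin]
        exact (n.descFactorial_le_pow g.1).trans ((Nat.pow_le_pow_left n.le_succ _).trans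
          (Nat.pow_le_pow_right n.succ_pos (le_sup (f := Sigma.fst) hg)))
    _ = G.card * (n + 1) ^ G.sup Sigma.fst := by rw [sum_const, smul_eq_mul]

def spanOrbit (G : Finset (Σ n : ℕ, M.obj n)) : SubFI M where
  carrier n := Submodule.span k (M.orbit G n)
  map_mem {_ n} e x hx := by
    refine Submodule.mem_comap.mp
      ((Submodule.span_le.mpr fun y hy => ?_ : _ ≤ Submodule.comap (M.map e) _) hx)
    obtain ⟨g, hg, f, rfl⟩ := M.mem_orbit.mp hy
    refine Submodule.subset_span (M.mem_orbit.mpr ⟨g, hg, f.trans e, ?_⟩)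
    rw [M.map_comp]
    rfl

variable {M}

theorem GeneratedInDegreeLE.mem_spanLE {d : ℕ} (h : M.GeneratedInDegreeLE d)
    {n : ℕ} (x : M.obj n) : x ∈ (M.spanLE d).carrier n := by
  refine h _ (fun m hm y => ?_) n x
  refine Submodule.mem_iSup_of_mem m (Submodule.mem_iSup_of_mem hm
    (Submodule.mem_iSup_of_mem (Function.Embedding.refl _) ⟨y, ?_⟩))
  rw [M.map_id, LinearMap.id_apply]

theorem FinitelyGenerated.exists_generatedInDegreeLE (h : M.FinitelyGenerated) :
    ∃ d, M.GeneratedInDegreeLE d := by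
  obtain ⟨G, hG⟩ := h
  exact ⟨G.sup Sigma.fst, fun N hN => hG N fun s hs => hN _ (le_sup hs) _⟩

theorem FinitelyGenerated.exists_span_card_le (h : M.FinitelyGenerated) :
    ∃ C d : ℕ, ∀ n : ℕ, ∃ s : Finset (M.obj n),
      Submodule.span k (s : Set (M.obj n)) = ⊤ ∧ s.card ≤ C * (n + 1) ^ d := by
  obtain ⟨G, hG⟩ := h
  refine ⟨G.card, G.sup Sigma.fst, fun n => ⟨M.orbit G n, ?_, M.card_orbit_le G n⟩⟩
  refine Submodule.eq_top_iff'.mpr fun x => hG (M.spanOrbit G) (fun g hg => ?_) n x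
  refine Submodule.subset_span (M.mem_orbit.mpr ⟨g, hg, .refl _, ?_⟩)
  rw [M.map_id]
  rfl

theorem FinitelyGenerated.finite_obj (h : M.FinitelyGenerated) (n : ℕ) :
    Module.Finite k (M.obj n) :=
  let ⟨_, _, hspan⟩ := h.exists_span_card_le
  let ⟨s, hs, _⟩ := hspan n
  Module.finite_def.mpr ⟨s, hs⟩

theorem finitelyGenerated_of_generatedInDegreeLE (hfin : ∀ n, Module.Finite k (M.obj n))
    {d : ℕ} (h : M.GeneratedInDegreeLE d) : M.FinitelyGenerated := by
  classical
  choose t ht using fun m => Module.finite_def.mp (hfin m)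
  refine ⟨(range (d + 1)).biUnion fun m => (t m).image (Sigma.mk m), fun N hN => h N ?_⟩
  intro m hm
  rw [← Submodule.eq_top_iff', eq_top_iff, ← ht m, Submodule.span_le]
  exact fun y hy => hN ⟨m, y⟩
    (mem_biUnion.mpr ⟨m, mem_range.mpr (by omega), mem_image_of_mem _ hy⟩)

end FIModule

namespace FIsharpModule

variable (V : FIsharpModule k)

def idem {n : ℕ} (S : Finset (Fin n)) : Module.End k (V.obj n) := V.map (PartialInj.idOn S)

theorem idem_mul_idem {n : ℕ} (S T : Finset (Fin n)) :
    V.idem S * V.idem T = V.idem (S ∩ T) := by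
  rw [idem, idem, idem, ← PartialInj.idOn_comp_idOn, V.map_comp]
  rfl

theorem idem_univ (n : ℕ) : V.idem (univ : Finset (Fin n)) = 1 := by
  rw [idem, PartialInj.idOn_univ, V.map_id]
  rfl

-- The partial identities commute, so they generate a commutative subalgebra of `End (V_n)`, in
-- which products over finsets make sense.
def idemAlg (n : ℕ) : Subalgebra k (Module.End k (V.obj n)) :=
  Algebra.adjoin k (Set.range (V.idem (n := n)))

instance (n : ℕ) : CommRing (V.idemAlg n) where
  mul_comm := (Algebra.isMulCommutative_adjoin k <| by
    rintro _ ⟨S, rfl⟩ _ ⟨T, rfl⟩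
    rw [idem_mul_idem, idem_mul_idem, inter_comm]).is_comm.comm

def del {n : ℕ} (j : Fin n) : V.idemAlg n :=
  ⟨V.idem {j}ᶜ, Algebra.subset_adjoin ⟨_, rfl⟩⟩

theorem isIdempotentElem_del {n : ℕ} (j : Fin n) : IsIdempotentElem (V.del j) :=
  Subtype.ext (by simp [del, idem_mul_idem])

def atom {n : ℕ} (S : Finset (Fin n)) : Module.End k (V.obj n) :=
  (boolAtom V.del S).val

theorem completeOrthogonalIdempotents_atom (n : ℕ) :
    CompleteOrthogonalIdempotents (V.atom (n := n)) :=
  (completeOrthogonalIdempotents_boolAtom V.isIdempotentElem_del).map (V.idemAlg n).val.toRingHom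

def coreProj (a : ℕ) : Module.End k (V.obj a) := V.atom (univ : Finset (Fin a))

-- The `W_a` of Church–Ellenberg–Farb: the vectors of `V_a` killed by every `idem {j}ᶜ`.
def core (a : ℕ) : Submodule k (V.obj a) := LinearMap.range (V.coreProj a)

theorem coe_prod_del {n : ℕ} (U : Finset (Fin n)) :
    (∏ i ∈ U, V.del i).val = V.idem Uᶜ := by
  induction U using Finset.induction_on with
  | empty => simp [idem_univ]
  | insert j U hj ih =>
    rw [prod_insert hj, Subalgebra.coe_mul, ih, del, idem_mul_idem]
    congr 1
    ext i
    simp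

theorem atom_eq {n : ℕ} (S : Finset (Fin n)) :
    V.atom S = (∏ i ∈ S, (1 - V.del i)).val * V.idem S := by
  rw [atom, boolAtom, Subalgebra.coe_mul, coe_prod_del, compl_compl]

theorem coreProj_eq (a : ℕ) :
    V.coreProj a = (∏ j : Fin a, (1 - V.del j)).val := by
  rw [coreProj, atom_eq, idem_univ, mul_one]

theorem map_emb_comp_one_sub_del {a n : ℕ} (f : Fin a ↪ Fin n) (j : Fin a) :
    V.map (embToPartial f) ∘ₗ (1 - V.del j).val
      = (1 - V.del (f j)).val ∘ₗ V.map (embToPartial f) := by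
  have hcomm : V.map (embToPartial f) ∘ₗ V.idem {j}ᶜ =
      V.idem {f j}ᶜ ∘ₗ V.map (embToPartial f) := by
    rw [idem, idem, ← V.map_comp, ← V.map_comp,
      PartialInj.embToPartial_comp_idOn f (T' := {f j}ᶜ) (by simp)]
  simp only [Subalgebra.coe_sub, Subalgebra.coe_one, del, LinearMap.comp_sub,
    LinearMap.sub_comp, hcomm]
  rfl

theorem map_emb_comp_prod {a n : ℕ} (f : Fin a ↪ Fin n) (t : Finset (Fin a)) :
    V.map (embToPartial f) ∘ₗ (∏ j ∈ t, (1 - V.del j)).val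
      = (∏ j ∈ t, (1 - V.del (f j))).val ∘ₗ V.map (embToPartial f) := by
  induction t using Finset.induction_on with
  | empty => simp [Module.End.one_eq_id]
  | insert j t hj ih =>
    simp only [prod_insert hj, Subalgebra.coe_mul, Module.End.mul_eq_comp]
    rw [← LinearMap.comp_assoc, map_emb_comp_one_sub_del, LinearMap.comp_assoc, ih,
      LinearMap.comp_assoc]

theorem map_invOfEmb_comp_map_emb {a n : ℕ} (f : Fin a ↪ Fin n) :
    V.map (PartialInj.invOfEmb f) ∘ₗ V.map (embToPartial f) = LinearMap.id := by
  rw [← V.map_comp, PartialInj.invOfEmb_comp_embToPartial, V.map_id]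

theorem atom_eq_comp {a n : ℕ} (f : Fin a ↪ Fin n) {S : Finset (Fin n)} (hS : univ.map f = S) :
    V.atom S = V.map (embToPartial f) ∘ₗ V.coreProj a ∘ₗ V.map (PartialInj.invOfEmb f) := by
  subst hS
  rw [coreProj_eq, ← LinearMap.comp_assoc, map_emb_comp_prod, LinearMap.comp_assoc,
    ← V.map_comp, PartialInj.embToPartial_comp_invOfEmb, atom_eq, prod_map]
  rfl

theorem coreProj_comp_map_eq_zero {m a : ℕ} (f : Fin m ↪ Fin a) (hf : ¬Surjective f) :
    V.coreProj a ∘ₗ V.map (embToPartial f) = 0 := by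
  obtain ⟨j, hj⟩ : ∃ j, ∀ i, f i ≠ j := by simpa [Surjective] using hf
  have hdel : V.idem {j}ᶜ ∘ₗ V.map (embToPartial f) = V.map (embToPartial f) := by
    rw [idem, ← V.map_comp, PartialInj.idOn_comp_embToPartial f (by simpa using hj)]
  rw [coreProj_eq, ← mul_prod_erase _ _ (mem_univ j), mul_comm, Subalgebra.coe_mul,
    Module.End.mul_eq_comp, LinearMap.comp_assoc]
  simp [del, LinearMap.sub_comp, hdel, Module.End.one_eq_id]

theorem sum_atom_apply {n : ℕ} (x : V.obj n) : ∑ S, V.atom S x = x := by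
  simpa using congr($((V.completeOrthogonalIdempotents_atom n).complete) x)

theorem generatedInDegreeLE_iff {d : ℕ} :
    V.toFI.GeneratedInDegreeLE d ↔ ∀ a, d < a → V.coreProj a = 0 := by
  constructor
  · intro h a ha
    refine LinearMap.ext fun x => h.mem_spanLE x |> (iSup₂_le fun m hm => iSup_le fun f => ?_ :
      _ ≤ LinearMap.ker (V.coreProj a))
    refine LinearMap.range_le_ker_iff.mpr (V.coreProj_comp_map_eq_zero f fun hf => ?_)
    have := Fintype.card_le_of_surjective f hf
    simp only [Fintype.card_fin] at this
    omega
  · intro h N hN n (x : V.obj n)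
    rw [← V.sum_atom_apply x]
    refine sum_mem fun S _ => ?_
    rw [V.atom_eq_comp _ (S.map_orderEmbOfFin_univ rfl)]
    by_cases hS : S.card ≤ d
    · exact N.map_mem _ (hN _ hS _)
    · rw [h _ (not_le.mp hS), LinearMap.zero_comp, LinearMap.comp_zero, LinearMap.zero_apply]
      exact zero_mem _

noncomputable def atomRangeEquiv {a n : ℕ} (f : Fin a ↪ Fin n) {S : Finset (Fin n)}
    (hS : univ.map f = S) : LinearMap.range (V.atom S) ≃ₗ[k] V.core a :=
  (LinearEquiv.ofEq _ _ (by rw [V.atom_eq_comp f hS])).trans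
    (LinearMap.rangeCompCompEquiv (V.map_invOfEmb_comp_map_emb f) _)

theorem finrank_eq_sum_choose {K : Type} [Field K] (V : FIsharpModule K) (n : ℕ)
    [Module.Finite K (V.obj n)] :
    Module.finrank K (V.obj n) =
      ∑ a ∈ range (n + 1), n.choose a * Module.finrank K (V.core a) := by
  rw [(V.completeOrthogonalIdempotents_atom n).linearEquivPiRange.finrank_eq,
    Module.finrank_pi_fintype]
  simp_rw [fun S : Finset (Fin n) =>
    (V.atomRangeEquiv _ (S.map_orderEmbOfFin_univ rfl)).finrank_eq]
  rw [← powerset_univ, sum_powerset_apply_card (fun a => Module.finrank K (V.core a)),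
    card_univ, Fintype.card_fin]
  rfl

theorem choose_le_card_of_span_eq_top {a : ℕ} [Module.Finite k (V.obj a)]
    (ha : V.coreProj a ≠ 0) {n : ℕ} {s : Finset (V.obj n)}
    (hs : Submodule.span k (s : Set (V.obj n)) = ⊤) : n.choose a ≤ s.card := by
  classical
  have : Module.Finite k (V.core a) := Module.Finite.range _
  have : Nontrivial (V.core a) :=
    Submodule.nontrivial_iff_ne_bot.mpr (LinearMap.range_eq_bot.not.mpr ha)
  let restrict : (Π S : Finset (Fin n), LinearMap.range (V.atom S)) →ₗ[k]
      Π S : {S : Finset (Fin n) // S.card = a}, LinearMap.range (V.atom S.1) :=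
    LinearMap.pi fun S => LinearMap.proj S.1
  let π := (LinearEquiv.piCongrRight fun S : {S : Finset (Fin n) // S.card = a} =>
      V.atomRangeEquiv _ (S.1.map_orderEmbOfFin_univ S.2)).toLinearMap ∘ₗ restrict ∘ₗ
    (V.completeOrthogonalIdempotents_atom n).linearEquivPiRange.toLinearMap
  have hrestrict : Surjective restrict :=
    Subtype.surjective_restrict (β := fun S => LinearMap.range (V.atom S)) _
  have hπ : Surjective π := by
    simp only [π, LinearMap.coe_comp, LinearEquiv.coe_coe]
    exact (LinearEquiv.surjective _).comp (hrestrict.comp (LinearEquiv.surjective _))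
  have hspan : Submodule.span k (π '' s) = ⊤ := by
    rw [Submodule.span_image, hs, Submodule.map_top, LinearMap.range_eq_top.mpr hπ]
  simpa using (Module.card_le_card_of_span_pi_eq_top (s := s.image π)
    (by rwa [coe_image])).trans card_image_le

theorem finitelyGenerated_of_span_card_le_eval (P : Polynomial ℚ)
    (h : ∀ n : ℕ, ∃ s : Finset (V.obj n),
      Submodule.span k (s : Set (V.obj n)) = ⊤ ∧ (s.card : ℚ) ≤ P.eval (n : ℚ)) :
    V.toFI.FinitelyGenerated := by
  have hfin (n : ℕ) : Module.Finite k (V.obj n) :=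
    let ⟨s, hs, _⟩ := h n
    Module.finite_def.mpr ⟨s, hs⟩
  refine V.toFI.finitelyGenerated_of_generatedInDegreeLE hfin (d := P.natDegree)
    (V.generatedInDegreeLE_iff.mpr fun a ha => ?_)
  by_contra hne
  refine ha.not_ge (Polynomial.le_natDegree_of_choose_le_eval fun n => ?_)
  obtain ⟨s, hs, hcard⟩ := h n
  exact (Nat.cast_le.mpr (V.choose_le_card_of_span_eq_top hne hs)).trans hcard

theorem exists_finrank_eq_eval {K : Type} [Field K] (V : FIsharpModule K)
    (h : V.toFI.FinitelyGenerated) :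
    ∃ P : Polynomial ℚ, ∀ n : ℕ,
      Module.Finite K (V.obj n) ∧ (Module.finrank K (V.obj n) : ℚ) = P.eval (n : ℚ) := by
  obtain ⟨d, hd⟩ := h.exists_generatedInDegreeLE
  have hcore (a : ℕ) (ha : d < a) : Module.finrank K (V.core a) = 0 := by
    rw [core, V.generatedInDegreeLE_iff.mp hd a ha, LinearMap.range_zero, finrank_bot]
  refine ⟨∑ a ∈ range (d + 1),
    ((Module.finrank K (V.core a) : ℚ) / a.factorial) • descPochhammer ℚ a,
    fun n => ⟨h.finite_obj n, ?_⟩⟩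
  have : Module.Finite K (V.obj n) := h.finite_obj n
  let u (a : ℕ) : ℚ := n.choose a * Module.finrank K (V.core a)
  calc (Module.finrank K (V.obj n) : ℚ) = ∑ a ∈ range (n + 1), u a := by
        simp [u, V.finrank_eq_sum_choose n]
    _ = ∑ a ∈ range (n + d + 1), u a :=
        (eventually_constant_sum (fun a ha => by simp [u, Nat.choose_eq_zero_of_lt ha])
          (by omega)).symm
    _ = ∑ a ∈ range (d + 1), u a :=
        eventually_constant_sum (fun a ha => by simp [u, hcore a (by omega)]) (by omega)
    _ = _ := by
        simp only [Polynomial.eval_finsetSum, Polynomial.eval_smul, smul_eq_mul, u,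
          Nat.cast_choose_eq_descPochhammer_div]
        refine sum_congr rfl fun a _ => by ring

theorem finitelyGenerated_of_finrank_le_eval {K : Type} [Field K] (V : FIsharpModule K)
    (P : Polynomial ℚ) (h : ∀ n : ℕ,
      Module.Finite K (V.obj n) ∧ (Module.finrank K (V.obj n) : ℚ) ≤ P.eval (n : ℚ)) :
    V.toFI.FinitelyGenerated := by
  refine V.finitelyGenerated_of_span_card_le_eval P fun n => ?_
  obtain ⟨hfin, hle⟩ := h n
  obtain ⟨s, hcard, hs⟩ :=
    (Module.Finite.fg_top (R := K) (M := V.obj n)).exists_span_finset_card_eq_spanFinrank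
  rw [← Module.finrank_eq_spanFinrank_of_free] at hcard
  exact ⟨s, hs, hcard ▸ hle⟩

end FIsharpModule

/-- **Dimensions of finitely generated FI♯-modules**
(Church–Ellenberg–Farb, Theorem 1.7 and Corollary 2.27).
For an FI♯-module `V` over a field `k` (of arbitrary characteristic), the following
are equivalent: (i) `V` is finitely generated as an FI-module; (ii) `dim_k V_n` is
bounded above by a polynomial in `n`; (iii) `dim_k V_n` is exactly equal to a
polynomial in `n` for all `n ≥ 0`.  Moreover, for an FI♯-module `U` over an arbitrary
commutative ring `R`: `U` is finitely generated if and only if the `R`-module `U_n` is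
generated by `O(n^d)` elements for some `d`. -/
theorem fisharp_dimension_polynomial (k : Type) [Field k] (V : FIsharpModule k)
    (R : Type) [CommRing R] (U : FIsharpModule R) :
    ((V.toFI.FinitelyGenerated ↔
        ∃ P : Polynomial ℚ, ∀ n : ℕ,
          Module.Finite k (V.obj n) ∧
          (Module.finrank k (V.obj n) : ℚ) ≤ P.eval (n : ℚ)) ∧
     (V.toFI.FinitelyGenerated ↔
        ∃ P : Polynomial ℚ, ∀ n : ℕ,
          Module.Finite k (V.obj n) ∧
          (Module.finrank k (V.obj n) : ℚ) = P.eval (n : ℚ))) ∧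
    (U.toFI.FinitelyGenerated ↔
        ∃ C d : ℕ, ∀ n : ℕ, ∃ s : Finset (U.obj n),
          Submodule.span R (s : Set (U.obj n)) = ⊤ ∧ s.card ≤ C * (n + 1) ^ d) := by
  have fg_of_eq : (∃ P : Polynomial ℚ, ∀ n : ℕ, Module.Finite k (V.obj n) ∧
      (Module.finrank k (V.obj n) : ℚ) = P.eval (n : ℚ)) → V.toFI.FinitelyGenerated :=
    fun ⟨P, hP⟩ => V.finitelyGenerated_of_finrank_le_eval P fun n => ⟨(hP n).1, (hP n).2.le⟩
  refine ⟨⟨⟨fun h => ?_, fun ⟨P, hP⟩ => V.finitelyGenerated_of_finrank_le_eval P hP⟩,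
    ⟨V.exists_finrank_eq_eval, fg_of_eq⟩⟩,
    ⟨FIModule.FinitelyGenerated.exists_span_card_le, ?_⟩⟩
  · obtain ⟨P, hP⟩ := V.exists_finrank_eq_eval h
    exact ⟨P, fun n => ⟨(hP n).1, (hP n).2.le⟩⟩
  · rintro ⟨C, d, h⟩
    refine U.finitelyGenerated_of_span_card_le_eval (C • (Polynomial.X + 1) ^ d) fun n => ?_
    obtain ⟨s, hs, hcard⟩ := h n
    exact ⟨s, hs, by simpa using (Nat.cast_le (α := ℚ)).mpr hcard⟩
end

section
/- Let k be a Noetherian ring containing Q. Then the category of FI-modules over k is Noetherian: every sub-FI-module of a finitely generated FI-module over k is itself finitely generated. -/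
open Function

universe u

variable {k : Type} [CommRing k]

/-- A sub-FI-module `N` of `V` is finitely generated: there is a finite set of
elements of `N` such that every sub-FI-module of `V` containing them contains `N`. -/
def SubFI.FinitelyGenerated {V : FIModule k} (N : SubFI V) : Prop :=
  ∃ S : Finset (Σ n : ℕ, V.obj n),
    (∀ s ∈ S, s.2 ∈ N.carrier s.1) ∧
    ∀ M : SubFI V, (∀ s ∈ S, s.2 ∈ M.carrier s.1) →
      ∀ n : ℕ, N.carrier n ≤ M.carrier n

/-!
A finitely generated FI-module is a quotient of a finite sum `F` of free FI-modules
`k[Hom_FI(dᵢ, -)]`, so it suffices to show that sub-FI-modules of `F` satisfy the ascending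
chain condition. Order the monomial basis of each `F n` lexicographically. Order-preserving
injections respect this order, so the leading-coefficient ideals of a sub-FI-module `N`, indexed
by monomials, are monotone for the divisibility "`y = g ∘ x` for an order-preserving `g`"; and
they determine `N` inside any larger sub-FI-module. Divisibility is a well-quasi-order by
Higman's lemma and `k` is Noetherian, so a strictly increasing chain of sub-FI-modules would give
a strictly increasing chain of ideals of `k`.
-/

open Finsupp

theorem WellQuasiOrdered.wellFoundedGT_of_strictMono {α β γ : Type*} {r : α → α → Prop}
    [IsPreorder α r] [Preorder β] [WellFoundedGT β] [PartialOrder γ] (hr : WellQuasiOrdered r)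
    (Φ : γ → α → β) (hΦ : StrictMono Φ) (hΦr : ∀ c a b, r a b → Φ c a ≤ Φ c b) :
    WellFoundedGT γ := by
  rw [WellFoundedGT, isWellFounded_iff, RelEmbedding.wellFounded_iff_isEmpty]
  refine ⟨fun C => ?_⟩
  have hC : StrictMono C := fun m n h => C.map_rel_iff.2 h
  have hjump : ∀ j, ∃ a, Φ (C j) a < Φ (C (j + 1)) a :=
    fun j => (Pi.lt_def.1 (hΦ (hC j.lt_succ_self))).2
  choose p hp using hjump
  obtain ⟨φ, hφ⟩ := hr.exists_monotone_subseq p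
  -- along a subsequence of jump points increasing for `r`, the values just after the jumps
  -- increase strictly
  refine not_strictMono_of_wellFoundedGT (fun s => Φ (C (φ s + 1)) (p (φ s)))
    (strictMono_nat_of_lt_succ fun s => ?_)
  calc Φ (C (φ s + 1)) (p (φ s))
      ≤ Φ (C (φ (s + 1))) (p (φ s)) :=
        hΦ.monotone (hC.monotone (φ.strictMono s.lt_succ_self)) (p (φ s))
    _ ≤ Φ (C (φ (s + 1))) (p (φ (s + 1))) := hΦr _ _ _ (hφ _ _ s.le_succ)
    _ < Φ (C (φ (s + 1) + 1)) (p (φ (s + 1))) := hp _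

theorem List.Lex.map {α β : Type*} {r : α → α → Prop} {s : β → β → Prop} {f : α → β}
    (hf : ∀ a b, r a b → s (f a) (f b)) {l₁ l₂ : List α} (h : List.Lex r l₁ l₂) :
    List.Lex s (l₁.map f) (l₂.map f) := by
  induction h with
  | nil => exact List.Lex.nil
  | cons _ ih => exact List.Lex.cons ih
  | rel hab => exact List.Lex.rel (hf _ _ hab)

/-- The word of `e` records, at each position of `Fin a`, the preimage under `e` if any. -/
theorem exists_orderEmbedding_trans_eq_of_sublist {D a b : ℕ} (e₁ : Fin D ↪ Fin a)
    (e₂ : Fin D ↪ Fin b) (h : (List.ofFn (partialInv e₁)).Sublist (List.ofFn (partialInv e₂))) :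
    ∃ g : Fin a ↪o Fin b, e₁.trans g.toEmbedding = e₂ := by
  obtain ⟨F, hF⟩ := List.sublist_iff_exists_fin_orderEmbedding_get_eq.1 h
  refine ⟨(Fin.castOrderIso List.length_ofFn.symm).toOrderEmbedding.trans
    (F.trans (Fin.castOrderIso List.length_ofFn).toOrderEmbedding), ?_⟩
  ext t
  have hword := hF (Fin.cast List.length_ofFn.symm (e₁ t))
  simp only [List.get_ofFn, Fin.cast_cast, Fin.cast_eq_self, partialInv_left e₁.injective]
    at hword
  simp [← (e₂.injective.isPartialInv _ _).1 hword.symm]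

theorem wellQuasiOrdered_exists_orderEmbedding_trans_eq (D : ℕ) :
    WellQuasiOrdered fun a b : Σ n, Fin D ↪ Fin n =>
      ∃ g : Fin a.1 ↪o Fin b.1, a.2.trans g.toEmbedding = b.2 := by
  have higman : WellQuasiOrdered (List.SublistForall₂ (· = ·) : List (Option (Fin D)) → _) := by
    rw [← Set.partiallyWellOrderedOn_univ_iff]
    simpa using Set.PartiallyWellOrderedOn.partiallyWellOrderedOn_sublistForall₂ (· = ·)
      (Set.partiallyWellOrderedOn_univ_iff.2 (Finite.wellQuasiOrdered _))
  intro f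
  obtain ⟨m, n, hmn, h⟩ := higman fun j => List.ofFn (partialInv (f j).2)
  simp only [List.sublistForall₂_iff, List.forall₂_eq_eq_eq, exists_eq_left'] at h
  exact ⟨m, n, hmn, exists_orderEmbedding_trans_eq_of_sublist _ _ h⟩

theorem Finsupp.mem_supported_Iic_max' {σ R : Type*} [LinearOrder σ] [Semiring R] {v : σ →₀ R}
    (hv : v.support.Nonempty) : v ∈ supported R R (Set.Iic (v.support.max' hv)) :=
  (mem_supported R v).2 fun _ hy => v.support.le_max' _ hy

namespace Submodule

variable {R σ τ : Type*} [LinearOrder σ] [LinearOrder τ]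

section Semiring

variable [Semiring R]

noncomputable def leadIdeal (P : Submodule R (σ →₀ R)) (x : σ) : Ideal R :=
  (P ⊓ supported R R (Set.Iic x)).map (lapply x)

theorem mem_leadIdeal {P : Submodule R (σ →₀ R)} {x : σ} {c : R} :
    c ∈ P.leadIdeal x ↔ ∃ v ∈ P, v ∈ supported R R (Set.Iic x) ∧ v x = c := by
  simp [leadIdeal, and_assoc]

theorem leadIdeal_mono {P Q : Submodule R (σ →₀ R)} (h : P ≤ Q) (x : σ) :
    P.leadIdeal x ≤ Q.leadIdeal x :=
  map_mono (inf_le_inf_right _ h)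

theorem leadIdeal_le_leadIdeal_map_lmapDomain (e : σ ↪o τ) (P : Submodule R (σ →₀ R)) (x : σ) :
    P.leadIdeal x ≤ (P.map (lmapDomain R R e)).leadIdeal (e x) := by
  classical
  intro c hc
  obtain ⟨v, hvP, hvx, rfl⟩ := mem_leadIdeal.1 hc
  refine mem_leadIdeal.2 ⟨mapDomain e v, mem_map_of_mem hvP, ?_, mapDomain_apply e.injective v x⟩
  rw [mem_supported] at hvx ⊢
  intro y hy
  obtain ⟨z, hz, rfl⟩ := Finset.mem_image.1 (mapDomain_support hy)
  exact e.monotone (hvx hz)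

end Semiring

/-- Subtracting from `v ∈ Q` an element of `P` with the same leading coefficient lowers the
leading monomial, so induction on it puts `v` in `P`. -/
theorem le_of_leadIdeal_le [Ring R] [WellFoundedLT σ] {P Q : Submodule R (σ →₀ R)} (hPQ : P ≤ Q)
    (h : ∀ x, Q.leadIdeal x ≤ P.leadIdeal x) : Q ≤ P := by
  suffices key : ∀ x, Q ⊓ supported R R (Set.Iic x) ≤ P by
    intro v hv
    obtain rfl | hv0 := eq_or_ne v 0
    · exact zero_mem _
    · exact key _ ⟨hv, mem_supported_Iic_max' (support_nonempty_iff.2 hv0)⟩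
  intro x
  induction x using WellFoundedLT.induction with
  | ind x ih =>
  rintro v ⟨hvQ, hvx⟩
  obtain ⟨w, hwP, hwx, hw⟩ := mem_leadIdeal.1 (h x (mem_leadIdeal.2 ⟨v, hvQ, hvx, rfl⟩))
  have hlt : ∀ y ∈ (v - w).support, y < x := by
    intro y hy
    refine lt_of_le_of_ne ?_ fun hyx => ?_
    · obtain hvy | hwy := Finset.mem_union.1 (support_sub hy)
      exacts [hvx hvy, hwx hwy]
    · rw [mem_support_iff, hyx, Finsupp.sub_apply, hw, sub_self] at hy
      exact hy rfl
  have hvw : v - w ∈ P := by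
    obtain h0 | h0 := eq_or_ne (v - w) 0
    · rw [h0]; exact zero_mem _
    · have hne := support_nonempty_iff.2 h0
      exact ih _ (hlt _ (Finset.max'_mem _ hne))
        ⟨sub_mem hvQ (hPQ hwP), mem_supported_Iic_max' hne⟩
  simpa using add_mem hvw hwP

end Submodule

structure FIModule.Hom (W V : FIModule k) where
  app : ∀ n : ℕ, W.obj n →ₗ[k] V.obj n
  naturality : ∀ {m n : ℕ} (f : Fin m ↪ Fin n) (x : W.obj m), app n (W.map f x) = V.map f (app m x)

def FIModule.Hom.range {V W : FIModule k} (φ : W.Hom V) : SubFI V where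
  carrier n := LinearMap.range (φ.app n)
  map_mem {m n} f := by
    rintro _ ⟨y, rfl⟩
    exact ⟨W.map f y, φ.naturality f y⟩

namespace SubFI

variable {V W : FIModule k}

theorem carrier_injective : Injective (SubFI.carrier : SubFI V → _) := by
  rintro ⟨N, _⟩ ⟨M, _⟩ rfl
  rfl

instance : PartialOrder (SubFI V) := PartialOrder.lift _ carrier_injective

def span (T : Set (Σ n : ℕ, V.obj n)) : SubFI V where
  carrier n := Submodule.span k {v | ∃ s ∈ T, ∃ g : Fin s.1 ↪ Fin n, V.map g s.2 = v}
  map_mem {m n} f {x} hx := by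
    rw [← Submodule.mem_comap]
    refine Submodule.span_le.2 ?_ hx
    rintro _ ⟨s, hs, g, rfl⟩
    exact Submodule.subset_span ⟨s, hs, g.trans f, by rw [V.map_comp]; rfl⟩

theorem mem_span_of_mem {T : Set (Σ n : ℕ, V.obj n)} {s : Σ n : ℕ, V.obj n} (hs : s ∈ T) :
    s.2 ∈ (span T).carrier s.1 :=
  Submodule.subset_span ⟨s, hs, Embedding.refl _, by rw [V.map_id]; rfl⟩

theorem span_le {T : Set (Σ n : ℕ, V.obj n)} {M : SubFI V} (h : ∀ s ∈ T, s.2 ∈ M.carrier s.1) :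
    span T ≤ M := fun n =>
  Submodule.span_le.2 <| by
    rintro _ ⟨s, hs, g, rfl⟩
    exact M.map_mem g (h s hs)

theorem span_mono {T T' : Set (Σ n : ℕ, V.obj n)} (h : T ⊆ T') : span T ≤ span T' :=
  span_le fun _ hs => mem_span_of_mem (h hs)

/-- A maximal finitely generated sub-FI-module of `N` must be `N` itself. -/
theorem finitelyGenerated_of_wellFoundedGT [WellFoundedGT (SubFI V)] (N : SubFI V) :
    N.FinitelyGenerated := by
  classical
  obtain ⟨_, ⟨T, hTN, rfl⟩, hmax⟩ := wellFounded_gt.has_min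
    {P | ∃ T : Finset (Σ n : ℕ, V.obj n), (∀ s ∈ T, s.2 ∈ N.carrier s.1) ∧
      span (T : Set (Σ n : ℕ, V.obj n)) = P}
    ⟨_, ∅, fun _ h => absurd h (Finset.notMem_empty _), rfl⟩
  refine ⟨T, hTN, fun M hM n x hx => span_le hM n ?_⟩
  have hT' : ∀ s ∈ insert ⟨n, x⟩ T, s.2 ∈ N.carrier s.1 := by
    simpa using ⟨hx, hTN⟩
  have hle : span (V := V) ↑T ≤ span ↑(insert ⟨n, x⟩ T) := span_mono (by simp)
  have heq := (eq_or_lt_of_le hle).resolve_right (hmax _ ⟨_, hT', rfl⟩)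
  exact heq ▸ mem_span_of_mem (s := ⟨n, x⟩) (by simp)

def comap (φ : W.Hom V) (M : SubFI V) : SubFI W where
  carrier n := (M.carrier n).comap (φ.app n)
  map_mem {m n} f x hx := by
    rw [Submodule.mem_comap, φ.naturality]
    exact M.map_mem f hx

theorem comap_strictMono {φ : W.Hom V} (hφ : ∀ n, Surjective (φ.app n)) :
    StrictMono (comap φ) :=
  Monotone.strictMono_of_injective (fun _ _ h n => Submodule.comap_mono (h n)) fun _ _ h =>
    carrier_injective <| funext fun n =>
      Submodule.comap_injective_of_surjective (hφ n) (congrFun (congrArg carrier h) n)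

theorem wellFoundedGT_of_surjective [WellFoundedGT (SubFI W)] {φ : W.Hom V}
    (hφ : ∀ n, Surjective (φ.app n)) : WellFoundedGT (SubFI V) :=
  (comap_strictMono hφ).wellFoundedGT

end SubFI

/-- The basis of `(FIModule.free k d).obj n`, the free FI-module `⊕ᵢ k[Hom_FI(d i, -)]`. -/
abbrev FIMon {ι : Type} (d : ι → ℕ) (n : ℕ) : Type := Σ i, Fin (d i) ↪ Fin n

namespace FIMon

variable {ι : Type} {d : ι → ℕ}

def map {m n : ℕ} (g : Fin m ↪ Fin n) (x : FIMon d m) : FIMon d n := ⟨x.1, x.2.trans g⟩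

def key {n : ℕ} (x : FIMon d n) : ι ×ₗ List (Fin n) := toLex (x.1, List.ofFn x.2)

theorem key_injective {n : ℕ} : Injective (key (d := d) (n := n)) := by
  rintro ⟨i, e⟩ ⟨j, e'⟩ h
  obtain ⟨rfl, h⟩ := Prod.ext_iff.1 (toLex.injective h)
  congr
  exact DFunLike.coe_injective (List.ofFn_injective h)

noncomputable instance [LinearOrder ι] (n : ℕ) : LinearOrder (FIMon d n) :=
  LinearOrder.lift' key key_injective

theorem map_strictMono [LinearOrder ι] {m n : ℕ} (g : Fin m ↪o Fin n) :
    StrictMono (map (d := d) g.toEmbedding) := by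
  intro x y h
  obtain h | ⟨h1, h2⟩ := Prod.Lex.toLex_lt_toLex.1 h
  · exact Prod.Lex.toLex_lt_toLex.2 (Or.inl h)
  · refine Prod.Lex.toLex_lt_toLex.2 (Or.inr ⟨h1, (List.lt_iff_lex_lt _ _).2 ?_⟩)
    have := List.Lex.map (fun _ _ h => g.strictMono h) ((List.lt_iff_lex_lt _ _).1 h2)
    rwa [List.map_ofFn, List.map_ofFn] at this

def Dvd (x y : Σ n, FIMon d n) : Prop :=
  ∃ g : Fin x.1 ↪o Fin y.1, map g.toEmbedding x.2 = y.2

instance : IsPreorder (Σ n, FIMon d n) Dvd where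
  refl _ := ⟨RelEmbedding.refl _, rfl⟩
  trans := by
    rintro _ _ _ ⟨g, hg⟩ ⟨g', hg'⟩
    exact ⟨g.trans g', by rw [← hg', ← hg]; rfl⟩

theorem wellQuasiOrdered_dvd [Finite ι] : WellQuasiOrdered (Dvd (d := d)) := by
  have := Fintype.ofFinite ι
  rw [← Set.partiallyWellOrderedOn_univ_iff]
  have hcover : (Set.univ : Set (Σ n, FIMon d n)) =
      ⋃ i ∈ Finset.univ, Set.range fun a : Σ n, Fin (d i) ↪ Fin n => ⟨a.1, i, a.2⟩ := by
    ext ⟨n, i, e⟩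
    simp
  rw [hcover, Finset.partiallyWellOrderedOn_bUnion]
  intro i _
  rw [← Set.image_univ]
  refine (Set.partiallyWellOrderedOn_univ_iff.2
    (wellQuasiOrdered_exists_orderEmbedding_trans_eq (d i))).image_of_monotone_on ?_
  rintro a - b - ⟨g, hg⟩
  exact ⟨g, by rw [← hg]; rfl⟩

end FIMon

namespace FIModule

variable {ι : Type} {d : ι → ℕ}

variable (k d) in
noncomputable abbrev free : FIModule k where
  obj n := FIMon d n →₀ k
  map g := lmapDomain k k (FIMon.map g)
  map_id _ := lmapDomain_id k k
  map_comp f g := lmapDomain_comp k k (FIMon.map f) (FIMon.map g)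

theorem leadIdeal_le_leadIdeal_map [LinearOrder ι] (N : SubFI (free k d)) {m n : ℕ}
    (g : Fin m ↪o Fin n) (x : FIMon d m) :
    (N.carrier m).leadIdeal x ≤ (N.carrier n).leadIdeal (FIMon.map g.toEmbedding x) :=
  (Submodule.leadIdeal_le_leadIdeal_map_lmapDomain
    (OrderEmbedding.ofStrictMono _ (FIMon.map_strictMono g)) _ x).trans
    (Submodule.leadIdeal_mono (Submodule.map_le_iff_le_comap.2 fun _ hv => N.map_mem _ hv) _)

instance wellFoundedGT_subFI_free [IsNoetherianRing k] [Finite ι] :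
    WellFoundedGT (SubFI (free k d)) := by
  have := Fintype.ofFinite ι
  let : LinearOrder ι := LinearOrder.lift' _ (Fintype.equivFin ι).injective
  refine FIMon.wellQuasiOrdered_dvd.wellFoundedGT_of_strictMono
    (fun N p => (N.carrier p.1).leadIdeal p.2) (fun N M h => ?_) ?_
  · refine lt_of_le_not_ge (fun p => Submodule.leadIdeal_mono (h.le p.1) p.2) fun hge => ?_
    exact h.not_ge fun n => Submodule.le_of_leadIdeal_le (h.le n) fun x => hge ⟨n, x⟩
  · rintro N _ _ ⟨g, hg⟩
    exact hg ▸ leadIdeal_le_leadIdeal_map N g _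

variable {V : FIModule k}

noncomputable def freeLift (w : ∀ i, V.obj (d i)) : (free k d).Hom V where
  app n := linearCombination k fun x : FIMon d n => V.map x.2 (w x.1)
  naturality {m _} g (v : FIMon d m →₀ k) := by
    change linearCombination k _ (mapDomain (FIMon.map g) v) = _
    rw [linearCombination_mapDomain, apply_linearCombination]
    congr 2
    funext x
    exact LinearMap.congr_fun (V.map_comp x.2 g) (w x.1)

theorem freeLift_surjective (w : ∀ i, V.obj (d i))
    (hw : ∀ N : SubFI V, (∀ i, w i ∈ N.carrier (d i)) → ∀ n x, x ∈ N.carrier n) (n : ℕ) :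
    Surjective ((freeLift w).app n) :=
  hw (freeLift w).range (fun i => ⟨(single ⟨i, Embedding.refl _⟩ 1 : FIMon d (d i) →₀ k), by
    simp [freeLift, V.map_id]⟩) n

theorem FinitelyGenerated.wellFoundedGT_subFI [IsNoetherianRing k] (hV : V.FinitelyGenerated) :
    WellFoundedGT (SubFI V) := by
  obtain ⟨S, hS⟩ := hV
  exact SubFI.wellFoundedGT_of_surjective (φ := freeLift (d := fun s : S => s.1.1) fun s => s.1.2)
    (freeLift_surjective _ fun N hN => hS N fun s hs => hN ⟨s, hs⟩)

end FIModule

theorem fimodules_noetherian_general (k : Type) [CommRing k] [IsNoetherianRing k]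
    (V : FIModule k) (hV : V.FinitelyGenerated) (N : SubFI V) :
    N.FinitelyGenerated :=
  have := hV.wellFoundedGT_subFI
  N.finitelyGenerated_of_wellFoundedGT

/-- **The Noetherian property of FI-modules** (Church–Ellenberg–Farb, Theorem 2.60).
Let `k` be a Noetherian ring containing `ℚ`.  Every sub-FI-module of a finitely
generated FI-module over `k` is finitely generated. -/
theorem fimodules_noetherian (k : Type) [CommRing k] [IsNoetherianRing k]
    [Algebra ℚ k] (V : FIModule k) (hV : V.FinitelyGenerated) (N : SubFI V) :
    N.FinitelyGenerated :=
  fimodules_noetherian_general k V hV N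
end

section
/- Let V be an FI#-module over a commutative ring k. Then for every injection f: S ↪ T of finite sets, the induced map f_*: V_S → V_T (via the underlying FI-module structure) is injective. In particular, for all m < n every map V_m → V_n induced by an injection {1,...,m} ↪ {1,...,n} is injective. -/
open Function

universe u

variable {k : Type} [CommRing k]

/-! An injection `f` has a partial inverse in FI♯, defined on the image of `f`, whose composite
with `f` is the identity; functoriality turns it into a left inverse of `f_*`. -/

noncomputable def PartialInj.partialInv {m n : ℕ} (f : Fin m ↪ Fin n) : PartialInj n m :=
  ⟨Function.partialInv f, fun _ _ _ hi hj =>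
    ((f.injective.isPartialInv _ _).1 hi).symm.trans ((f.injective.isPartialInv _ _).1 hj)⟩

theorem PartialInj.partialInv_comp_embToPartial {m n : ℕ} (f : Fin m ↪ Fin n) :
    (partialInv f).comp (embToPartial f) = PartialInj.id m :=
  PartialInj.ext fun i => partialInv_left f.injective i

theorem FIsharpModule.leftInverse_map {V : FIsharpModule k} {m n : ℕ}
    {f : PartialInj m n} {g : PartialInj n m} (h : g.comp f = PartialInj.id m) :
    LeftInverse (V.map g) (V.map f) := fun x => by
  rw [← LinearMap.comp_apply, ← V.map_comp, h, V.map_id, LinearMap.id_apply]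

/-- **Injectivity in FI♯-modules** (Church–Ellenberg–Farb, Proposition 2.25).
If `V` is an FI♯-module over a commutative ring `k`, then for every injection
`f : S ↪ T` of finite sets the induced map `f_* : V_S → V_T` of the underlying
FI-module is injective.  In particular, for all `m < n` (indeed all `m, n`) every map
`V_m → V_n` induced by an injection `{1,…,m} ↪ {1,…,n}` is injective. -/
theorem fisharp_maps_injective (k : Type) [CommRing k] (V : FIsharpModule k)
    {m n : ℕ} (f : Fin m ↪ Fin n) :
    Function.Injective ((V.toFI).map f) :=
  (FIsharpModule.leftInverse_map (PartialInj.partialInv_comp_embToPartial f)).injective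
end

section
/- Let V be an FI-module over a field of characteristic 0. If V is generated in degree ≤ d, then V has weight ≤ d: every irreducible constituent V(λ)_n of every V_n satisfies |λ| ≤ d. -/
open Function

universe u

variable {k : Type} [CommRing k]

/-! ### Partitions, Young symmetrizers and Specht modules -/

/-- The row index of box number `i` (0-indexed) in the canonical filling of the Young
diagram with row lengths `μ` (read row by row). -/
def rowOf : List ℕ → ℕ → ℕ
  | [], _ => 0
  | a :: l, i => if i < a then 0 else rowOf l (i - a) + 1

/-- The column index of box number `i` in the canonical filling of the Young diagram
with row lengths `μ`. -/
def colOf : List ℕ → ℕ → ℕ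
  | [], i => i
  | a :: l, i => if i < a then i else colOf l (i - a)

/-- The Young symmetrizer `c_μ = a_μ · b_μ` in the group algebra `k[S_n]` attached to the
canonical tableau of the partition `μ` of `n` (given as its list of row lengths):
`a_μ` is the sum of the row-preserving permutations and `b_μ` is the signed sum of the
column-preserving permutations. -/
noncomputable def youngSym (k : Type) [CommRing k] (n : ℕ) (μ : List ℕ) :
    MonoidAlgebra k (Equiv.Perm (Fin n)) :=
  (∑ σ : Equiv.Perm (Fin n),
      if ∀ i : Fin n, rowOf μ ((σ i : ℕ)) = rowOf μ (i : ℕ)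
      then MonoidAlgebra.single σ (1 : k) else 0) *
  (∑ σ : Equiv.Perm (Fin n),
      if ∀ i : Fin n, colOf μ ((σ i : ℕ)) = colOf μ (i : ℕ)
      then MonoidAlgebra.single σ (((Equiv.Perm.sign σ : ℤˣ) : ℤ) : k) else 0)

/-- Over a field of characteristic `0`, the irreducible representation `V_μ` of `S_n`
attached to a partition `μ` of `n` occurs in a representation `ρ` if and only if the
Young symmetrizer `c_μ` acts by a nonzero operator.  We take this as the definition of
"`V_μ` is an irreducible constituent of `ρ`". -/
def repHasConstituent (k : Type) [CommRing k] {n : ℕ} {U : Type} [AddCommGroup U]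
    [Module k U] (ρ : Representation k (Equiv.Perm (Fin n)) U) (μ : List ℕ) : Prop :=
  ρ.asAlgebraHom (youngSym k n μ) ≠ 0

/-- Over a field of characteristic `0`, the multiplicity of the irreducible `V_μ` in a
(finite-dimensional) representation `ρ` of `S_n` equals `dim_k (c_μ · U)`, the rank of
the operator by which the Young symmetrizer acts. -/
noncomputable def repMultiplicity (k : Type) [CommRing k] {n : ℕ} {U : Type}
    [AddCommGroup U] [Module k U] (ρ : Representation k (Equiv.Perm (Fin n)) U)
    (μ : List ℕ) : ℕ :=
  Module.finrank k (LinearMap.range (ρ.asAlgebraHom (youngSym k n μ)))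

/-- A partition (of an arbitrary natural number): a weakly decreasing list of positive
integers. -/
structure SPartition where
  parts : List ℕ
  sorted : parts.Pairwise (· ≥ ·)
  pos : ∀ p ∈ parts, 0 < p

/-- The size `|λ|` of a partition. -/
def SPartition.size (l : SPartition) : ℕ := l.parts.sum

/-- The largest part `λ₁` of a partition. -/
def SPartition.width (l : SPartition) : ℕ := l.parts.headD 0

/-- The padded partition `λ[n] = (n - |λ|, λ₁, λ₂, …)`, as a list of row lengths.
(It is a genuine partition of `n` whenever `n ≥ |λ| + λ₁`.) -/
def SPartition.padded (l : SPartition) (n : ℕ) : List ℕ := (n - l.size) :: l.parts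

/-- `V(λ)_n = V_{λ[n]}` is an irreducible constituent of `V_n`. -/
def FIModule.HasConstituentAt (V : FIModule k) (lam : SPartition) (n : ℕ) : Prop :=
  repHasConstituent k (V.rep n) (lam.padded n)

/-- An FI-module over a field of characteristic `0` has weight `≤ d` if every
irreducible constituent `V(λ)_n` of every `V_n` satisfies `|λ| ≤ d`. -/
def FIModule.WeightLE (V : FIModule k) (d : ℕ) : Prop :=
  ∀ (n : ℕ) (lam : SPartition), lam.size + lam.width ≤ n →
    V.HasConstituentAt lam n → lam.size ≤ d

/-- The (left ideal model of the) Specht module: `k[S_n]·c_μ`, the image of right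
multiplication by the Young symmetrizer on the group algebra. -/
noncomputable def spechtModule (k : Type) [CommRing k] (n : ℕ) (μ : List ℕ) :
    Submodule k (MonoidAlgebra k (Equiv.Perm (Fin n))) :=
  LinearMap.range (LinearMap.mulRight k (youngSym k n μ))

/-!
Let `V` be generated by images of `V_m` with `m ≤ d`, and let `|λ| > d`. A vector `x = V(f) y`
with `f : [m] ↪ [n]` is fixed by every permutation of the `n - m > n - |λ|` points outside
the image of `f`. The Young diagram of `λ[n]` has only `n - |λ|` columns, so two of these
points `p, q` share a column; then the transposition `(p q)` is column-stable, odd and fixes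
`x`, so the column antisymmetrizer, hence the Young symmetrizer `c_{λ[n]}`, kills `x`. Thus
`c_{λ[n]}` kills all of `V_n` and `V(λ)_n` is not a constituent.
-/

open Equiv Finset

theorem colOf_lt_headD {l : List ℕ} (hl : l.Pairwise (· ≥ ·)) {j : ℕ} (hj : j < l.sum) :
    colOf l j < l.headD 0 := by
  induction l generalizing j with
  | nil => simp at hj
  | cons a t ih =>
    simp only [colOf, List.headD]
    split_ifs with hja
    · exact hja
    · have hrest : j - a < t.sum := by simp only [List.sum_cons] at hj; omega
      have hhead : t.headD 0 ≤ a := by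
        cases t with
        | nil => simp at hrest
        | cons b _ => exact (List.pairwise_cons.mp hl).1 b List.mem_cons_self
      exact (ih hl.of_cons hrest).trans_le hhead

namespace SPartition

theorem colOf_padded_lt (lam : SPartition) {n : ℕ} (hn : lam.size + lam.width ≤ n) {i : ℕ}
    (hi : i < n) : colOf (lam.padded n) i < n - lam.size := by
  simp only [padded, colOf, size, width] at hn ⊢
  split_ifs with hin
  · exact hin
  · have := colOf_lt_headD lam.sorted (j := i - (n - lam.parts.sum)) (by omega)
    omega

theorem exists_ne_colOf_padded_eq_of_card_lt (lam : SPartition) {n : ℕ}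
    (hn : lam.size + lam.width ≤ n) (S : Finset (Fin n)) (hS : #S < lam.size) :
    ∃ p ∉ S, ∃ q ∉ S, p ≠ q ∧ colOf (lam.padded n) p = colOf (lam.padded n) q := by
  have hcard : #(range (n - lam.size)) < #Sᶜ := by
    rw [card_range, card_compl, Fintype.card_fin]
    omega
  obtain ⟨p, hp, q, hq, hpq, hcol⟩ := exists_ne_map_eq_of_card_lt_of_maps_to hcard
    (f := fun i : Fin n => colOf (lam.padded n) i)
    fun i _ => mem_range.mpr (lam.colOf_padded_lt hn i.isLt)
  exact ⟨p, mem_compl.mp hp, q, mem_compl.mp hq, hpq, hcol⟩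

end SPartition

theorem Equiv.apply_swap_apply_of_apply_eq {α β : Type*} [DecidableEq α] {c : α → β}
    {p q : α} (h : c p = c q) (i : α) : c (swap p q i) = c i := by
  rcases eq_or_ne i p with rfl | hip
  · rw [swap_apply_left, h]
  rcases eq_or_ne i q with rfl | hiq
  · rw [swap_apply_right, h]
  · rw [swap_apply_of_ne_of_ne hip hiq]

theorem Equiv.Perm.forall_mul_apply_eq_iff {α β : Type*} {c : α → β} {σ τ : Perm α}
    (hτ : ∀ i, c (τ i) = c i) : (∀ i, c ((σ * τ) i) = c i) ↔ ∀ i, c (σ i) = c i := by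
  refine ⟨fun h i => ?_, fun h i => by rw [Perm.mul_apply, h, hτ]⟩
  have hi := h (τ⁻¹ i)
  have hτi := hτ (τ⁻¹ i)
  simp only [Perm.mul_apply, Perm.coe_inv, apply_symm_apply] at hi hτi
  rw [hi, hτi]

/-- The terms of `σ` and `σ * swap p q` cancel. -/
theorem Representation.asAlgebraHom_signedSum_apply_eq_zero {α U : Type*} [Fintype α]
    [DecidableEq α] [AddCommGroup U] [Module k U] (ρ : Representation k (Perm α) U)
    (P : Perm α → Prop) [DecidablePred P] {p q : α} (hpq : p ≠ q)
    (hP : ∀ σ, P (σ * swap p q) ↔ P σ) {x : U} (hx : ρ (swap p q) x = x) :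
    ρ.asAlgebraHom (∑ σ : Perm α,
      if P σ then MonoidAlgebra.single σ (((Perm.sign σ : ℤˣ) : ℤ) : k) else 0) x = 0 := by
  simp only [map_sum, LinearMap.sum_apply, apply_ite, Representation.asAlgebraHom_single,
    map_zero]
  refine sum_involution (fun σ _ => σ * swap p q) (fun σ _ => ?_) (fun σ _ _ => ?_)
    (fun _ _ => mem_univ _) (fun σ _ => by simp [mul_assoc])
  · by_cases hσ : P σ <;> simp [hσ, hP σ, hx, hpq]
  · simpa using hpq

namespace FIModule

theorem rep_comp_map_of_forall_apply_eq (V : FIModule k) {m n : ℕ} (f : Fin m ↪ Fin n)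
    {σ : Perm (Fin n)} (hσ : ∀ i, σ (f i) = f i) : V.rep n σ ∘ₗ V.map f = V.map f := by
  change V.map σ.toEmbedding ∘ₗ V.map f = V.map f
  rw [← V.map_comp]
  congr 1
  ext i
  exact congrArg Fin.val (hσ i)

theorem asAlgebraHom_youngSym_padded_comp_map_eq_zero (V : FIModule k) {lam : SPartition}
    {m n : ℕ} (hn : lam.size + lam.width ≤ n) (hm : m < lam.size) (f : Fin m ↪ Fin n) :
    (V.rep n).asAlgebraHom (youngSym k n (lam.padded n)) ∘ₗ V.map f = 0 := by
  obtain ⟨p, hp, q, hq, hpq, hcol⟩ :=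
    lam.exists_ne_colOf_padded_eq_of_card_lt hn (univ.map f) (by simpa using hm)
  have hfix : V.rep n (swap p q) ∘ₗ V.map f = V.map f :=
    V.rep_comp_map_of_forall_apply_eq f fun i =>
      swap_apply_of_ne_of_ne (fun h => hp (by simp [← h])) (fun h => hq (by simp [← h]))
  let col (i : Fin n) : ℕ := colOf (lam.padded n) i
  have hstable (σ : Perm (Fin n)) :=
    Perm.forall_mul_apply_eq_iff (c := col) (σ := σ)
      (apply_swap_apply_of_apply_eq (c := col) hcol)
  ext y
  rw [youngSym, map_mul, LinearMap.comp_apply, Module.End.mul_apply,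
    Representation.asAlgebraHom_signedSum_apply_eq_zero _ _ hpq hstable
      (LinearMap.congr_fun hfix y)]
  simp

def lowDegreeSpan (V : FIModule k) (d : ℕ) : SubFI V where
  carrier n := ⨆ (m : ℕ) (_ : m ≤ d) (f : Fin m ↪ Fin n), LinearMap.range (V.map f)
  map_mem g x hx := by
    refine Submodule.mem_comap.mp
      ((iSup₂_le fun m hm => iSup_le fun f => ?_ : _ ≤ Submodule.comap (V.map g) _) hx)
    rw [← Submodule.map_le_iff_le_comap, ← LinearMap.range_comp, ← V.map_comp]
    exact le_iSup₂_of_le m hm (le_iSup_of_le (f.trans g) le_rfl)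

theorem GeneratedInDegreeLE.eq_zero_of_comp_map_eq_zero {V : FIModule k} {d n : ℕ}
    (h : V.GeneratedInDegreeLE d) {W : Type*} [AddCommGroup W] [Module k W]
    (φ : V.obj n →ₗ[k] W)
    (hφ : ∀ m ≤ d, ∀ f : Fin m ↪ Fin n, φ ∘ₗ V.map f = 0) : φ = 0 := by
  have hspan : (V.lowDegreeSpan d).carrier n ≤ LinearMap.ker φ :=
    iSup₂_le fun m hm => iSup_le fun f => LinearMap.range_le_ker_iff.mpr (hφ m hm f)
  refine LinearMap.ext fun x => hspan (h _ (fun m hm y => ?_) n x)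
  exact Submodule.mem_iSup_of_mem m <| Submodule.mem_iSup_of_mem hm <|
    Submodule.mem_iSup_of_mem (Embedding.refl _) ⟨y, by rw [V.map_id]; rfl⟩

end FIModule

theorem generation_degree_bounds_weight_general (k : Type) [Field k]
    (V : FIModule k) (d : ℕ) (h : V.GeneratedInDegreeLE d) : V.WeightLE d := by
  intro n lam hn hconst
  by_contra! hd
  exact hconst <| h.eq_zero_of_comp_map_eq_zero _ fun m hm f =>
    V.asAlgebraHom_youngSym_padded_comp_map_eq_zero hn (hm.trans_lt hd) f

/-- **Generation degree bounds weight** (Church–Ellenberg–Farb, Proposition 2.51).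
Let `V` be an FI-module over a field of characteristic `0`.  If `V` is generated in
degree `≤ d`, then `V` has weight `≤ d`: every irreducible constituent `V(λ)_n` of
every `V_n` satisfies `|λ| ≤ d`. -/
theorem generation_degree_bounds_weight (k : Type) [Field k] [CharZero k]
    (V : FIModule k) (d : ℕ) (h : V.GeneratedInDegreeLE d) : V.WeightLE d :=
  generation_degree_bounds_weight_general k V d h
end
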